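/- Let θ be a unital action of an inverse monoid S on a K-algebra A and M an A⋊_θS-bimodule. Then the set M^A = {x ∈ M : a·x = x·a for all a ∈ A} is a left KS-submodule of M, and the evaluation map f ↦ f(1_A) is an isomorphism of left KS-modules Hom_{A^e}(A,M) ≅ M^A, where the KS-action on Hom_{A^e}(A,M) is (s·f)(a) = s·f(s⁻¹·a). -/
import Mathlib


/-- An inverse monoid structure on a monoid `S`: every element `s` has a unique
generalized inverse `inv s`. -/
structure InverseMonoidStr (S : Type*) [Monoid S] where
  inv : S → S
  mul_inv_mul : ∀ s, s * inv s * s = s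
  inv_mul_inv : ∀ s, inv s * s * inv s = inv s
  inv_unique : ∀ s t, s * t * s = s → t * s * t = t → t = inv s

/-- The natural partial order of an inverse monoid: `s ≤ t` iff `s = f * t`
for some idempotent `f`. -/
def natLE {S : Type*} [Monoid S] (s t : S) : Prop := ∃ f : S, f * f = f ∧ s = f * t

/-- The minimum group congruence `σ` on an inverse monoid:
`(s, t) ∈ σ` iff there is `u` with `u ≤ s` and `u ≤ t`. -/
def sigmaRel {S : Type*} [Monoid S] (s t : S) : Prop := ∃ u : S, natLE u s ∧ natLE u t

/-- An inverse monoid is `E`-unitary if `e ≤ s` with `e` idempotent implies that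
`s` is idempotent. -/
def EUnitary (S : Type*) [Monoid S] : Prop :=
  ∀ u s : S, u * u = u → natLE u s → s * s = s

/-- A unital action `θ` of an inverse monoid `S` on a unital `K`-algebra `A`.
Each `θ s` is an algebra isomorphism from the unital ideal `1_{s⁻¹}A` onto the
unital ideal `1_s A`, where `1_s = e s` is a central idempotent of `A`; here the
partially defined map `θ_s` is encoded by the globally defined map
`a ↦ θ_s(1_{s⁻¹}·a)`, and `θ : S → I(A)` is a homomorphism of monoids with
`θ 1 = id`. -/
structure UnitalAction (K : Type*) [CommRing K] {S : Type*} [Monoid S]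
    (I : InverseMonoidStr S) (A : Type*) [Ring A] [Algebra K A] where
  θ : S → A → A
  e : S → A
  e_idem : ∀ s, e s * e s = e s
  e_central : ∀ s (a : A), e s * a = a * e s
  e_one : e 1 = 1
  theta_add : ∀ s (a b : A), θ s (a + b) = θ s a + θ s b
  theta_mul : ∀ s (a b : A), θ s (a * b) = θ s a * θ s b
  theta_smul : ∀ s (k : K) (a : A), θ s (k • a) = k • θ s a
  theta_dom : ∀ s (a : A), θ s (e (I.inv s) * a) = θ s a
  theta_ran : ∀ s (a : A), e s * θ s a = θ s a
  theta_comp : ∀ s t (a : A), θ (s * t) a = θ s (θ t a)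
  theta_one : ∀ a : A, θ 1 a = a
  theta_inv : ∀ s (a : A), θ (I.inv s) (θ s a) = e (I.inv s) * a
  theta_e : ∀ s, θ s 1 = e s

namespace UnitalAction

variable {K : Type*} [CommRing K] {S : Type*} [Monoid S] {I : InverseMonoidStr S}
  {A : Type*} [Ring A] [Algebra K A]

/-- An action `θ` of `S` on `A` is compatible if `θ_s` and `θ_t` agree on the
intersection `1_{s⁻¹}A ∩ 1_{t⁻¹}A` of their domains whenever `(s,t) ∈ σ`. -/
def Compatible (T : UnitalAction K I A) : Prop :=
  ∀ s t, sigmaRel s t → ∀ a : A, T.θ s (T.e (I.inv t) * a) = T.θ t (T.e (I.inv s) * a)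

/-- The `K`-submodule `D_g = Σ_{s ∈ g} 1_s A` of `A` attached to the σ-class of `t`. -/
def Dsub (T : UnitalAction K I A) (t : S) : Submodule K A :=
  Submodule.span K {x : A | ∃ s : S, ∃ a : A, sigmaRel s t ∧ x = T.e s * a}

/-- The `K`-module `L(A,θ,S) = ⊕_{s ∈ S} 1_s A δ_s` is carried by finitely supported
functions `S →₀ A`; its multiplication is `a δ_s · b δ_t = a θ_s(1_{s⁻¹} b) δ_{st}`. -/
noncomputable def lmul (T : UnitalAction K I A) (f g : S →₀ A) : S →₀ A :=
  f.sum fun s a => g.sum fun t b => Finsupp.single (s * t) (a * T.θ s b)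

/-- The carrier of `L(A,θ,S)` inside `S →₀ A`: functions whose value at `s`
lies in `1_s A`. -/
def LSet (T : UnitalAction K I A) : Set (S →₀ A) :=
  {f : S →₀ A | ∀ s, T.e s * f s = f s}

/-- The generating set `X = {a δ_s − a δ_t : a ∈ 1_s A, s ≤ t}` of the ideal `N`. -/
def XSet (T : UnitalAction K I A) : Set (S →₀ A) :=
  {x : S →₀ A | ∃ s t : S, ∃ a : A, natLE s t ∧ T.e s * a = a ∧
    x = Finsupp.single s a - Finsupp.single t a}

end UnitalAction

namespace UnitalAction

variable {K : Type*} [CommRing K] {S : Type*} [Monoid S] {I : InverseMonoidStr S}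
  {A : Type*} [Ring A] [Algebra K A]

/-- A bimodule `M` over the crossed product `A⋊_θS = L(A,θ,S)/N`, encoded by a pair
of commuting unital left/right actions of `L(A,θ,S)` on the `K`-module `M` which
annihilate the ideal `N = span_K X` on both sides. -/
structure CrossedBimodule (T : UnitalAction K I A) (M : Type*)
    [AddCommGroup M] [Module K M] where
  l : (S →₀ A) → M → M
  r : (S →₀ A) → M → M
  l_add_left : ∀ (x y : S →₀ A) (m : M), l (x + y) m = l x m + l y m
  l_add_right : ∀ (x : S →₀ A) (m m' : M), l x (m + m') = l x m + l x m'
  l_smul_left : ∀ (k : K) (x : S →₀ A) (m : M), l (k • x) m = k • l x m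
  l_smul_right : ∀ (k : K) (x : S →₀ A) (m : M), l x (k • m) = k • l x m
  r_add_left : ∀ (x y : S →₀ A) (m : M), r (x + y) m = r x m + r y m
  r_add_right : ∀ (x : S →₀ A) (m m' : M), r x (m + m') = r x m + r x m'
  r_smul_left : ∀ (k : K) (x : S →₀ A) (m : M), r (k • x) m = k • r x m
  r_smul_right : ∀ (k : K) (x : S →₀ A) (m : M), r x (k • m) = k • r x m
  l_mul : ∀ (x y : S →₀ A) (m : M), l (T.lmul x y) m = l x (l y m)
  r_mul : ∀ (x y : S →₀ A) (m : M), r (T.lmul x y) m = r y (r x m)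
  l_one : ∀ m : M, l (Finsupp.single (1 : S) (1 : A)) m = m
  r_one : ∀ m : M, r (Finsupp.single (1 : S) (1 : A)) m = m
  lr_comm : ∀ (x y : S →₀ A) (m : M), l x (r y m) = r y (l x m)
  l_ann : ∀ x ∈ Submodule.span K T.XSet, ∀ m : M, l x m = 0
  r_ann : ∀ x ∈ Submodule.span K T.XSet, ∀ m : M, r x m = 0

variable {T : UnitalAction K I A} {M : Type*} [AddCommGroup M] [Module K M]

/-- The left action of `A` on `M`, `a · m = (a δ_1 + N) · m`. -/
noncomputable def adL (B : CrossedBimodule T M) (a : A) (m : M) : M :=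
  B.l (Finsupp.single (1 : S) a) m

/-- The right action of `A` on `M`, `m · a = m · (a δ_1 + N)`. -/
noncomputable def adR (B : CrossedBimodule T M) (a : A) (m : M) : M :=
  B.r (Finsupp.single (1 : S) a) m

/-- The left `S`-action on `M`: `s · m = (1_s δ_s) · m · (1_{s⁻¹} δ_{s⁻¹})`. -/
noncomputable def sdot (B : CrossedBimodule T M) (s : S) (m : M) : M :=
  B.r (Finsupp.single (I.inv s) (T.e (I.inv s))) (B.l (Finsupp.single s (T.e s)) m)

/-- The relations submodule defining `A ⊗_{A^e} M` as a quotient of `A ⊗_K M`: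
`x·(a ⊗ b) ⊗ m − x ⊗ (a ⊗ b)·m`, i.e. `(b x a) ⊗ m − x ⊗ (a·m·b)`. -/
noncomputable def relAe (B : CrossedBimodule T M) :
    Submodule K (TensorProduct K A M) :=
  Submodule.span K {z : TensorProduct K A M | ∃ (x a b : A) (m : M),
    z = ((b * x * a) ⊗ₜ[K] m) - (x ⊗ₜ[K] (adL B a (adR B b m)))}

end UnitalAction

section Aux

variable {K : Type*} [CommRing K] {S : Type*} [Monoid S] {I : InverseMonoidStr S}
  {A : Type*} [Ring A] [Algebra K A]

lemma InverseMonoidStr.inv_inv (I : InverseMonoidStr S) (s : S) :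
    I.inv (I.inv s) = s :=
  (I.inv_unique (I.inv s) s (I.inv_mul_inv s) (I.mul_inv_mul s)).symm

namespace UnitalAction

lemma theta_zero (T : UnitalAction K I A) (s : S) : T.θ s 0 = 0 := by
  have h := T.theta_smul s 0 0
  simpa using h

lemma theta_inv' (T : UnitalAction K I A) (s : S) (a : A) :
    T.θ s (T.θ (I.inv s) a) = T.e s * a := by
  have h := T.theta_inv (I.inv s) a
  rwa [I.inv_inv] at h

lemma lmul_single (T : UnitalAction K I A) (s t : S) (a b : A) :
    T.lmul (Finsupp.single s a) (Finsupp.single t b)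
      = Finsupp.single (s * t) (a * T.θ s b) := by
  classical
  unfold UnitalAction.lmul
  rw [Finsupp.sum_single_index]
  · rw [Finsupp.sum_single_index]
    simp [theta_zero]
  · simp

variable {T : UnitalAction K I A} {M : Type*} [AddCommGroup M] [Module K M]
  (B : T.CrossedBimodule M)

lemma ll_single (s t : S) (a b : A) (m : M) :
    B.l (Finsupp.single s a) (B.l (Finsupp.single t b) m)
      = B.l (Finsupp.single (s * t) (a * T.θ s b)) m := by
  rw [← B.l_mul, lmul_single]

lemma rr_single (s t : S) (a b : A) (m : M) :
    B.r (Finsupp.single t b) (B.r (Finsupp.single s a) m)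
      = B.r (Finsupp.single (s * t) (a * T.θ s b)) m := by
  rw [← B.r_mul, lmul_single]

lemma adL_adL (a b : A) (m : M) : adL B a (adL B b m) = adL B (a * b) m := by
  unfold adL
  rw [ll_single, one_mul, T.theta_one]

lemma adR_adR (a b : A) (m : M) : adR B a (adR B b m) = adR B (b * a) m := by
  unfold adR
  rw [rr_single, one_mul, T.theta_one]

lemma adL_one (m : M) : adL B 1 m = m := B.l_one m

lemma adR_one (m : M) : adR B 1 m = m := B.r_one m

lemma adL_adR (a b : A) (m : M) :
    adL B a (adR B b m) = adR B b (adL B a m) := B.lr_comm _ _ m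

lemma sdot_add (s : S) (m m' : M) :
    sdot B s (m + m') = sdot B s m + sdot B s m' := by
  unfold sdot
  rw [B.l_add_right, B.r_add_right]

lemma sdot_smul (k : K) (s : S) (m : M) :
    sdot B s (k • m) = k • sdot B s m := by
  unfold sdot
  rw [B.l_smul_right, B.r_smul_right]

lemma adL_sdot (s : S) (a : A) (m : M) :
    adL B a (sdot B s m) = sdot B s (adL B (T.θ (I.inv s) a) m) := by
  unfold adL sdot
  rw [B.lr_comm, ll_single, one_mul, T.theta_one, ← T.e_central,
    ll_single, mul_one, theta_inv', ← mul_assoc, T.e_idem]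

lemma adR_sdot (s : S) (a : A) (m : M) :
    adR B a (sdot B s m) = sdot B s (adR B (T.θ (I.inv s) a) m) := by
  unfold adR sdot
  rw [B.lr_comm, rr_single, rr_single, mul_one, one_mul, T.theta_one,
    T.theta_ran, ← T.e_central, T.theta_ran]

lemma sdot_adL_adR (s : S) (a c : A) (m : M) :
    sdot B s (adL B (T.θ (I.inv s) a) (adR B (T.θ (I.inv s) c) m))
      = adL B a (adR B c (sdot B s m)) := by
  rw [adR_sdot, adL_sdot]

lemma sdot_adR_e (s : S) (m : M) :
    sdot B s (adR B (T.e (I.inv s)) m) = sdot B s m := by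
  unfold adR sdot
  rw [B.lr_comm, rr_single, one_mul, T.theta_one, T.e_idem]

end UnitalAction

end Aux

open UnitalAction in
/-- Let `θ` be a unital action of an inverse monoid `S` on a
`K`-algebra `A` and `M` an `A⋊_θS`-bimodule.  Then `M^A = {x ∈ M : a·x = x·a ∀a ∈ A}`
is a left `KS`-submodule of `M`, and the evaluation map `f ↦ f(1_A)` is an isomorphism
of left `KS`-modules `Hom_{A^e}(A,M) ≅ M^A`, where the `KS`-action on `Hom_{A^e}(A,M)`
is `(s·f)(a) = s·f(s⁻¹·a)`. -/
theorem invariants_iso_hom {K : Type*} [CommRing K] {S : Type*} [Monoid S]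
    (I : InverseMonoidStr S) {A : Type*} [Ring A] [Algebra K A]
    (T : UnitalAction K I A) {M : Type*} [AddCommGroup M] [Module K M]
    (B : T.CrossedBimodule M) :
    -- `M^A` is a left `KS`-submodule of `M`
    (∀ x : M, (∀ a : A, adL B a x = adR B a x) →
      ∀ s : S, ∀ a : A, adL B a (sdot B s x) = adR B a (sdot B s x)) ∧
    -- the `KS`-action `(s·f)(a) = s·f(s⁻¹·a)` preserves `Hom_{A^e}(A,M)`
    (∀ f : A → M,
      ((∀ a b : A, f (a + b) = f a + f b) ∧ (∀ (k : K) (a : A), f (k • a) = k • f a) ∧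
        (∀ a b c : A, f (b * a * c) = adL B b (adR B c (f a)))) →
      ∀ s : S,
      ((∀ a b : A, sdot B s (f (T.θ (I.inv s) (a + b)))
          = sdot B s (f (T.θ (I.inv s) a)) + sdot B s (f (T.θ (I.inv s) b))) ∧
       (∀ (k : K) (a : A), sdot B s (f (T.θ (I.inv s) (k • a)))
          = k • sdot B s (f (T.θ (I.inv s) a))) ∧
       (∀ a b c : A, sdot B s (f (T.θ (I.inv s) (b * a * c)))
          = adL B b (adR B c (sdot B s (f (T.θ (I.inv s) a))))))) ∧
    -- evaluation at `1_A` lands in `M^A`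
    (∀ f : A → M,
      ((∀ a b : A, f (a + b) = f a + f b) ∧ (∀ (k : K) (a : A), f (k • a) = k • f a) ∧
        (∀ a b c : A, f (b * a * c) = adL B b (adR B c (f a)))) →
      ∀ a : A, adL B a (f 1) = adR B a (f 1)) ∧
    -- evaluation at `1_A` is injective on `Hom_{A^e}(A,M)`
    (∀ f g : A → M,
      ((∀ a b : A, f (a + b) = f a + f b) ∧ (∀ (k : K) (a : A), f (k • a) = k • f a) ∧
        (∀ a b c : A, f (b * a * c) = adL B b (adR B c (f a)))) →
      ((∀ a b : A, g (a + b) = g a + g b) ∧ (∀ (k : K) (a : A), g (k • a) = k • g a) ∧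
        (∀ a b c : A, g (b * a * c) = adL B b (adR B c (g a)))) →
      f 1 = g 1 → f = g) ∧
    -- evaluation at `1_A` is surjective onto `M^A`
    (∀ x : M, (∀ a : A, adL B a x = adR B a x) →
      ∃ f : A → M,
        ((∀ a b : A, f (a + b) = f a + f b) ∧ (∀ (k : K) (a : A), f (k • a) = k • f a) ∧
          (∀ a b c : A, f (b * a * c) = adL B b (adR B c (f a)))) ∧ f 1 = x) ∧
    -- evaluation intertwines the `KS`-actions: `(s·f)(1_A) = s·(f(1_A))`
    (∀ f : A → M,
      ((∀ a b : A, f (a + b) = f a + f b) ∧ (∀ (k : K) (a : A), f (k • a) = k • f a) ∧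
        (∀ a b c : A, f (b * a * c) = adL B b (adR B c (f a)))) →
      ∀ s : S, sdot B s (f (T.θ (I.inv s) (1 : A))) = sdot B s (f 1)) := by
  refine ⟨?_, ?_, ?_, ?_, ?_, ?_⟩
  · -- M^A is invariant under sdot
    intro x hx s a
    rw [adL_sdot, adR_sdot, hx]
  · -- the action preserves Hom
    intro f ⟨hadd, hsmul, hbim⟩ s
    refine ⟨?_, ?_, ?_⟩
    · intro a b
      rw [T.theta_add, hadd, sdot_add]
    · intro k a
      rw [T.theta_smul, hsmul, sdot_smul]
    · intro a b c
      rw [T.theta_mul, T.theta_mul, hbim, sdot_adL_adR]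
  · -- evaluation lands in M^A
    intro f ⟨_, _, hbim⟩ a
    have h1 : f a = adL B a (f 1) := by
      have := hbim 1 a 1
      rw [mul_one, mul_one] at this
      rw [this, adR_one]
    have h2 : f a = adR B a (f 1) := by
      have := hbim 1 1 a
      rw [one_mul, one_mul] at this
      rw [this, adL_one]
    rw [← h1, ← h2]
  · -- injectivity
    intro f g ⟨_, _, hf⟩ ⟨_, _, hg⟩ h
    funext a
    have h1 : f a = adL B a (f 1) := by
      have := hf 1 a 1
      rw [mul_one, mul_one] at this
      rw [this, adR_one]
    have h2 : g a = adL B a (g 1) := by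
      have := hg 1 a 1
      rw [mul_one, mul_one] at this
      rw [this, adR_one]
    rw [h1, h2, h]
  · -- surjectivity
    intro x hx
    refine ⟨fun a => adL B a x, ⟨?_, ?_, ?_⟩, ?_⟩
    · intro a b
      show adL B (a + b) x = adL B a x + adL B b x
      unfold UnitalAction.adL
      rw [Finsupp.single_add, B.l_add_left]
    · intro k a
      show adL B (k • a) x = k • adL B a x
      unfold UnitalAction.adL
      rw [← Finsupp.smul_single, B.l_smul_left]
    · intro a b c
      show adL B (b * a * c) x = adL B b (adR B c (adL B a x))
      rw [← adL_adR, adL_adL, ← hx, adL_adL]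
    · show adL B 1 x = x
      exact adL_one B x
  · -- evaluation intertwines
    intro f ⟨_, _, hbim⟩ s
    have h1 : f (T.θ (I.inv s) 1) = adR B (T.e (I.inv s)) (f 1) := by
      have := hbim 1 1 (T.e (I.inv s))
      rw [one_mul, one_mul] at this
      rw [T.theta_e, this, adL_one]
    rw [h1, sdot_adR_e]
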